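/- Let E be a complex Hilbert space, let H be a bounded selfadjoint operator on E, let F be a unitary operator on E, and let r > 2‖H‖. Then the block operator M = [[−H, rF*], [rF, FHF*]] on E ⊕ E is selfadjoint and satisfies M² ≥ (r − 2‖H‖)²·1; in particular M is invertible. -/

import Mathlib

open ContinuousLinearMap in
/-- The block operator `[[A, B], [C, D]]` on the Hilbert space direct sum `E ⊕ F`
(realized as `WithLp 2 (E × F)`), acting by `(x, y) ↦ (A x + B y, C x + D y)`. -/
noncomputable def blockOp {E F : Type*} [NormedAddCommGroup E] [InnerProductSpace ℂ E]
    [NormedAddCommGroup F] [InnerProductSpace ℂ F]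
    (A : E →L[ℂ] E) (B : F →L[ℂ] E) (C : E →L[ℂ] F) (D : F →L[ℂ] F) :
    WithLp 2 (E × F) →L[ℂ] WithLp 2 (E × F) :=
  ((WithLp.prodContinuousLinearEquiv 2 ℂ E F).symm.toContinuousLinearMap.comp
    ((A.comp (fst ℂ E F) + B.comp (snd ℂ E F)).prod
      (C.comp (fst ℂ E F) + D.comp (snd ℂ E F)))).comp
    (WithLp.prodContinuousLinearEquiv 2 ℂ E F).toContinuousLinearMap

/-!
Conjugating by the unitary `U = diag(1, F)` turns `M` into the Dirac-type operator
`D = [[-H, r], [r, H]]`, which is selfadjoint with `D² = diag(H² + r², H² + r²)`. Hence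
`‖M v‖ = ‖D (U* v)‖ ≥ r ‖v‖`, so in fact `M² ≥ r² ≥ (r - 2‖H‖)²`, and a selfadjoint operator bounded
below in this way is invertible.
-/

namespace ContinuousLinearMap

variable {𝕜 E : Type*} [RCLike 𝕜] [NormedAddCommGroup E] [InnerProductSpace 𝕜 E] [CompleteSpace E]

open scoped InnerProductSpace

lemma re_inner_star_mul_self_apply (T : E →L[𝕜] E) (x : E) :
    RCLike.re ⟪(star T * T) x, x⟫_𝕜 = ‖T x‖ ^ 2 := by
  rw [mul_apply_eq_comp, star_eq_adjoint, adjoint_inner_left, inner_self_eq_norm_sq]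

lemma smul_one_le_star_mul_self {T : E →L[𝕜] E} {c : ℝ} (h : ∀ x, c * ‖x‖ ^ 2 ≤ ‖T x‖ ^ 2) :
    (c : 𝕜) • (1 : E →L[𝕜] E) ≤ star T * T := by
  rw [le_def, isPositive_def']
  refine ⟨(IsSelfAdjoint.star_mul_self T).sub ?_, fun x ↦ ?_⟩
  · exact IsSelfAdjoint.smul (RCLike.conj_ofReal c) (.one _)
  · rw [reApplyInnerSelf_apply, sub_apply, inner_sub_left, map_sub, re_inner_star_mul_self_apply]
    simpa [inner_smul_left, inner_self_eq_norm_sq] using h x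

lemma isUnit_star_mul_self_of_forall_le {T : E →L[𝕜] E} {c : ℝ} (hc : 0 < c)
    (h : ∀ x, c * ‖x‖ ^ 2 ≤ ‖T x‖ ^ 2) : IsUnit (star T * T) :=
  isUnit_of_forall_le_norm_inner_map _ (c := ⟨c, hc.le⟩) hc fun x ↦ by
    rw [mul_comm]
    exact (h x).trans ((re_inner_star_mul_self_apply T x).symm.le.trans (RCLike.re_le_norm _))

end ContinuousLinearMap

@[ext] lemma WithLp.prod_ext {p : ENNReal} {α β : Type*} [AddCommGroup α] [AddCommGroup β]
    {v w : WithLp p (α × β)} (h₁ : v.fst = w.fst) (h₂ : v.snd = w.snd) : v = w :=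
  WithLp.ofLp_injective p (Prod.ext h₁ h₂)

section blockOp

variable {E F : Type*} [NormedAddCommGroup E] [InnerProductSpace ℂ E]
    [NormedAddCommGroup F] [InnerProductSpace ℂ F]

open ContinuousLinearMap

@[simp] lemma blockOp_apply_fst (A : E →L[ℂ] E) (B : F →L[ℂ] E) (C : E →L[ℂ] F) (D : F →L[ℂ] F)
    (v : WithLp 2 (E × F)) : (blockOp A B C D v).fst = A v.fst + B v.snd := rfl

@[simp] lemma blockOp_apply_snd (A : E →L[ℂ] E) (B : F →L[ℂ] E) (C : E →L[ℂ] F) (D : F →L[ℂ] F)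
    (v : WithLp 2 (E × F)) : (blockOp A B C D v).snd = C v.fst + D v.snd := rfl

lemma blockOp_one : blockOp (1 : E →L[ℂ] E) 0 0 (1 : F →L[ℂ] F) = 1 := by
  ext v <;> simp

lemma blockOp_mul (A A' : E →L[ℂ] E) (B B' : F →L[ℂ] E) (C C' : E →L[ℂ] F) (D D' : F →L[ℂ] F) :
    blockOp A B C D * blockOp A' B' C' D' =
      blockOp (A ∘L A' + B ∘L C') (A ∘L B' + B ∘L D') (C ∘L A' + D ∘L C') (C ∘L B' + D ∘L D') := by
  ext v <;> simp <;> abel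

lemma star_blockOp [CompleteSpace E] [CompleteSpace F]
    (A : E →L[ℂ] E) (B : F →L[ℂ] E) (C : E →L[ℂ] F) (D : F →L[ℂ] F) :
    star (blockOp A B C D) = blockOp (adjoint A) (adjoint C) (adjoint B) (adjoint D) := by
  rw [star_eq_adjoint, eq_comm, eq_adjoint_iff]
  intro v w
  simp only [WithLp.prod_inner_apply, WithLp.ofLp_fst, WithLp.ofLp_snd, blockOp_apply_fst,
    blockOp_apply_snd, inner_add_left, inner_add_right, adjoint_inner_left]
  ring

end blockOp

section dirac

variable {E : Type*} [NormedAddCommGroup E] [InnerProductSpace ℂ E]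

open ContinuousLinearMap
open scoped InnerProductSpace

noncomputable def diracOp (H : E →L[ℂ] E) (r : ℝ) : WithLp 2 (E × E) →L[ℂ] WithLp 2 (E × E) :=
  blockOp (-H) ((r : ℂ) • 1) ((r : ℂ) • 1) H

lemma isSelfAdjoint_diracOp [CompleteSpace E] {H : E →L[ℂ] E} (hH : IsSelfAdjoint H) (r : ℝ) :
    IsSelfAdjoint (diracOp H r) := by
  have hr : adjoint ((r : ℂ) • (1 : E →L[ℂ] E)) = (r : ℂ) • 1 := by
    rw [← star_eq_adjoint]; exact IsSelfAdjoint.smul (RCLike.conj_ofReal r) (.one _)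
  rw [IsSelfAdjoint, diracOp, star_blockOp, hr, ← star_eq_adjoint, ← star_eq_adjoint,
    hH.neg.star_eq, hH.star_eq]

lemma diracOp_sq (H : E →L[ℂ] E) (r : ℝ) :
    diracOp H r ^ 2 =
      blockOp (H ^ 2 + ((r ^ 2 : ℝ) : ℂ) • 1) 0 0 (H ^ 2 + ((r ^ 2 : ℝ) : ℂ) • 1) := by
  rw [sq, diracOp, blockOp_mul]
  congr 1 <;> ext x <;> simp [sq, mul_smul, add_comm, Complex.coe_smul]

lemma sq_mul_norm_sq_le_norm_diracOp_apply_sq [CompleteSpace E] {H : E →L[ℂ] E}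
    (hH : IsSelfAdjoint H) (r : ℝ) (w : WithLp 2 (E × E)) :
    r ^ 2 * ‖w‖ ^ 2 ≤ ‖diracOp H r w‖ ^ 2 := by
  have hdiag (x : E) : RCLike.re ⟪(H ^ 2 + ((r ^ 2 : ℝ) : ℂ) • 1 : E →L[ℂ] E) x, x⟫_ℂ =
      ‖H x‖ ^ 2 + r ^ 2 * ‖x‖ ^ 2 := by
    have hHx := re_inner_star_mul_self_apply H x
    rw [hH.star_eq, ← sq] at hHx
    rw [add_apply, inner_add_left, map_add, hHx, smul_apply, one_apply_eq_self, inner_smul_left,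
      Complex.conj_ofReal, RCLike.re_to_complex, Complex.re_ofReal_mul, ← RCLike.re_to_complex,
      inner_self_eq_norm_sq]
  have hD := re_inner_star_mul_self_apply (diracOp H r) w
  rw [(isSelfAdjoint_diracOp hH r).star_eq, ← sq, diracOp_sq, WithLp.prod_inner_apply] at hD
  simp only [WithLp.ofLp_fst, WithLp.ofLp_snd, blockOp_apply_fst, blockOp_apply_snd, zero_apply,
    add_zero, zero_add, map_add, hdiag] at hD
  rw [← hD, WithLp.prod_norm_sq_eq_of_L2]
  nlinarith [sq_nonneg ‖H w.fst‖, sq_nonneg ‖H w.snd‖]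

lemma blockOp_one_zero_zero_mem_unitary [CompleteSpace E] {F : E →L[ℂ] E}
    (hF : F ∈ unitary (E →L[ℂ] E)) :
    blockOp 1 0 0 F ∈ unitary (WithLp 2 (E × E) →L[ℂ] WithLp 2 (E × E)) := by
  have hF' := Unitary.mem_iff.mp hF
  rw [star_eq_adjoint] at hF'
  rw [Unitary.mem_iff, star_blockOp, adjoint_one, map_zero, blockOp_mul, blockOp_mul]
  simp only [← mul_def, mul_one, mul_zero, zero_mul, add_zero, zero_add, hF'.1, hF'.2, blockOp_one,
    and_self]

lemma blockOp_eq_conj_diracOp [CompleteSpace E] (H F : E →L[ℂ] E) (r : ℝ) :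
    blockOp (-H) ((r : ℂ) • adjoint F) ((r : ℂ) • F) (F * H * adjoint F) =
      blockOp 1 0 0 F * diracOp H r * star (blockOp 1 0 0 F) := by
  rw [star_blockOp, diracOp, blockOp_mul, blockOp_mul]
  congr 1 <;> ext x <;> simp [adjoint_one]

end dirac

/-- For `H` bounded selfadjoint, `F` unitary and `r > 2‖H‖`, the block operator
`M = [[−H, rF*], [rF, FHF*]]` is selfadjoint and satisfies `M² ≥ (r − 2‖H‖)²·1`; in
particular `M` is invertible. -/
theorem dirac_phase_gap {E : Type*} [NormedAddCommGroup E] [InnerProductSpace ℂ E]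
    [CompleteSpace E] (H F : E →L[ℂ] E) (hH : IsSelfAdjoint H)
    (hF : F ∈ unitary (E →L[ℂ] E)) (r : ℝ) (hr : 2 * ‖H‖ < r) :
    IsSelfAdjoint (blockOp (-H) ((r : ℂ) • ContinuousLinearMap.adjoint F) ((r : ℂ) • F)
        (F * H * ContinuousLinearMap.adjoint F)) ∧
    (((r - 2 * ‖H‖) ^ 2 : ℝ) : ℂ) • (1 : WithLp 2 (E × E) →L[ℂ] WithLp 2 (E × E)) ≤
      (blockOp (-H) ((r : ℂ) • ContinuousLinearMap.adjoint F) ((r : ℂ) • F)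
        (F * H * ContinuousLinearMap.adjoint F)) ^ 2 ∧
    IsUnit (blockOp (-H) ((r : ℂ) • ContinuousLinearMap.adjoint F) ((r : ℂ) • F)
        (F * H * ContinuousLinearMap.adjoint F)) := by
  rw [blockOp_eq_conj_diracOp]
  set U := blockOp (1 : E →L[ℂ] E) 0 0 F
  set M := U * diracOp H r * star U
  have hU : U ∈ unitary _ := blockOp_one_zero_zero_mem_unitary hF
  have hM : IsSelfAdjoint M := (isSelfAdjoint_diracOp hH r).conjugate U
  have hbound (v : WithLp 2 (E × E)) : r ^ 2 * ‖v‖ ^ 2 ≤ ‖M v‖ ^ 2 := by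
    simpa [M, mul_apply_eq_comp, ContinuousLinearMap.norm_map_of_mem_unitary hU,
      ContinuousLinearMap.norm_map_of_mem_unitary (Unitary.star_mem hU)]
      using sq_mul_norm_sq_le_norm_diracOp_apply_sq hH r (star U v)
  have hr₀ : 0 < r := by linarith [norm_nonneg H]
  have hgap : (r - 2 * ‖H‖) ^ 2 ≤ r ^ 2 := by nlinarith [norm_nonneg H]
  have hsq : M ^ 2 = star M * M := by rw [sq, hM.star_eq]
  refine ⟨hM, hsq ▸ ContinuousLinearMap.smul_one_le_star_mul_self fun v ↦ ?_,
    (isUnit_pow_iff two_ne_zero).mp (hsq ▸ ?_)⟩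
  · exact (mul_le_mul_of_nonneg_right hgap (sq_nonneg _)).trans (hbound v)
  · exact ContinuousLinearMap.isUnit_star_mul_self_of_forall_le (by positivity) hbound
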